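/- arXiv:1008.2166 — 2 statements merged into one kernel-verified Lean document; each statement's English description precedes it below -/
import Mathlib

section
/- Let h ∈ R be a squarefree polynomial. Then d(h) = 0 if and only if there exists a squarefree polynomial H ∈ R with d(H) = h. -/
open MvPolynomial

/-- The differential operator `d = Σ_{v∈V} ∂/∂X_v` on
`MvPolynomial ((Z/2)^n) (ZMod 2)`. -/
noncomputable def dOp (n : ℕ) :
    MvPolynomial (Fin n → ZMod 2) (ZMod 2) →ₗ[ZMod 2]
      MvPolynomial (Fin n → ZMod 2) (ZMod 2) :=
  ∑ v : Fin n → ZMod 2, (pderiv v).toLinearMap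

/-- A polynomial is squarefree if every monomial in its support has all exponents `≤ 1`
and does not involve the variable indexed by the zero vector. -/
def IsSqFree (n : ℕ) (p : MvPolynomial (Fin n → ZMod 2) (ZMod 2)) : Prop :=
  ∀ m ∈ p.support, (∀ v : Fin n → ZMod 2, m v ≤ 1) ∧ m 0 = 0

/-!
The operator `d` is the derivation of `R` sending every variable to `1`. In characteristic 2,
`d (d (p * X_i)) = d (d p) * X_i + 2 * d p = d (d p) * X_i`, so `d ∘ d = 0`.
Conversely, fix a nonzero `v` and put `x = X_v`. Since `d x = 1`, for any `p, q ∈ ker d`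
we get `d (x * (p + x * q)) = p + 2 * x * q = p`. Take `p = h` and `q = ∂h/∂x`, which lies in
`ker d` because `∂/∂x` commutes with `d`. In characteristic 2, `h + x * ∂h/∂x` keeps exactly
the monomials of `h` of even degree in `x`, i.e. those free of `x`, so `H = x * (h + x * ∂h/∂x)`
is again squarefree.
-/

namespace MvPolynomial

variable {σ R : Type*}

section CommSemiring

variable [CommSemiring R]

variable (σ R) in
noncomputable def sumPderiv : Derivation R (MvPolynomial σ R) (MvPolynomial σ R) :=
  mkDerivation R fun _ => 1

@[simp]
theorem sumPderiv_X (i : σ) : sumPderiv σ R (X i) = 1 :=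
  mkDerivation_X R _ i

theorem sumPderiv_apply [Fintype σ] (p : MvPolynomial σ R) :
    sumPderiv σ R p = ∑ i, pderiv i p := by
  have sum_apply (q : MvPolynomial σ R) :
      (∑ i, pderiv i : Derivation R _ _) q = ∑ i, pderiv i q := by
    rw [← Derivation.coeFnAddMonoidHom_apply, map_sum, Finset.sum_apply]
    rfl
  have : sumPderiv σ R = ∑ i, pderiv i := derivation_ext fun j => by
    classical
    simp [sum_apply, Pi.single_apply]
  rw [this, sum_apply]

theorem coeff_X_mul_pderiv (i : σ) (p : MvPolynomial σ R) (m : σ →₀ ℕ) :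
    coeff m (X i * pderiv i p) = m i * coeff m p := by
  induction p using MvPolynomial.induction_on' with
  | monomial u a =>
    classical
    rw [X_mul_pderiv_monomial, coeff_smul, coeff_monomial]
    split_ifs with h
    · simp [h, nsmul_eq_mul]
    · simp
  | add p q hp hq => simp only [map_add, mul_add, coeff_add, hp, hq]

end CommSemiring

section CommRing

variable [CommRing R]

theorem pderiv_sumPderiv_comm (i : σ) (p : MvPolynomial σ R) :
    pderiv i (sumPderiv σ R p) = sumPderiv σ R (pderiv i p) := by
  have : ⁅pderiv i, sumPderiv σ R⁆ = 0 := derivation_ext fun j => by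
    classical
    rw [Derivation.commutator_apply, sumPderiv_X, pderiv_one, pderiv_X]
    by_cases hij : i = j <;> simp [hij]
  rw [← sub_eq_zero, ← Derivation.commutator_apply, this, Derivation.zero_apply]

theorem sumPderiv_sumPderiv [CharP R 2] (p : MvPolynomial σ R) :
    sumPderiv σ R (sumPderiv σ R p) = 0 := by
  induction p using MvPolynomial.induction_on with
  | C a => simp
  | add p q hp hq => simp [hp, hq]
  | mul_X p i hp => simp [Derivation.leibniz, hp, CharTwo.add_self_eq_zero]

theorem coeff_add_X_mul_pderiv [CharP R 2] (i : σ) (p : MvPolynomial σ R) (m : σ →₀ ℕ) :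
    coeff m (p + X i * pderiv i p) = if Even (m i) then coeff m p else 0 := by
  rw [coeff_add, coeff_X_mul_pderiv]
  split_ifs with he
  · rw [(CharP.cast_eq_zero_iff R 2 _).mpr he.two_dvd, zero_mul, add_zero]
  · obtain ⟨k, hk⟩ := Nat.not_even_iff_odd.mp he
    simp [hk, CharTwo.two_eq_zero, CharTwo.add_self_eq_zero]

end CommRing

end MvPolynomial

theorem Derivation.map_mul_add_mul_of_charTwo {R A : Type*} [CommSemiring R] [CommRing A]
    [Algebra R A] [CharP A 2] (D : Derivation R A A) {x p q : A} (hx : D x = 1)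
    (hp : D p = 0) (hq : D q = 0) : D (x * (p + x * q)) = p := by
  rw [D.leibniz, map_add, D.leibniz, hx, hp, hq]
  simp only [smul_eq_mul]
  linear_combination (x * q) * CharTwo.two_eq_zero (R := A)

theorem IsSqFree.X_mul_add_X_mul_pderiv {n : ℕ} {h : MvPolynomial (Fin n → ZMod 2) (ZMod 2)}
    (hh : IsSqFree n h) {v : Fin n → ZMod 2} (hv : v ≠ 0) :
    IsSqFree n (X v * (h + X v * pderiv v h)) := by
  intro m' hm'
  rw [support_X_mul, Finset.mem_map] at hm'
  obtain ⟨m, hm, rfl⟩ := hm'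
  rw [mem_support_iff, coeff_add_X_mul_pderiv, ite_ne_right_iff] at hm
  obtain ⟨heven, hm⟩ := hm
  obtain ⟨hle, hzero⟩ := hh m (mem_support_iff.mpr hm)
  have hmv : m v = 0 := by
    have := hle v
    rw [Nat.even_iff] at heven
    omega
  refine ⟨fun w => ?_, ?_⟩
  · rcases eq_or_ne v w with rfl | hw
    · simp [hmv]
    · simpa [Finsupp.single_apply, hw] using hle w
  · simp [hv, hzero]

theorem dOp_apply (n : ℕ) (p : MvPolynomial (Fin n → ZMod 2) (ZMod 2)) :
    dOp n p = sumPderiv (Fin n → ZMod 2) (ZMod 2) p := by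
  rw [sumPderiv_apply, dOp, LinearMap.sum_apply]
  rfl

/-- A squarefree polynomial `h` satisfies `d h = 0` iff it is `d` of a squarefree
polynomial. -/
theorem sqfree_dOp_eq_zero_iff (n : ℕ) (hn : 1 ≤ n)
    (h : MvPolynomial (Fin n → ZMod 2) (ZMod 2)) (hsf : IsSqFree n h) :
    dOp n h = 0 ↔
      ∃ H : MvPolynomial (Fin n → ZMod 2) (ZMod 2), IsSqFree n H ∧ dOp n H = h := by
  simp only [dOp_apply]
  constructor
  · intro hd
    have : Nonempty (Fin n) := ⟨⟨0, hn⟩⟩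
    obtain ⟨v, hv⟩ := exists_ne (0 : Fin n → ZMod 2)
    refine ⟨X v * (h + X v * pderiv v h), hsf.X_mul_add_X_mul_pderiv hv, ?_⟩
    exact Derivation.map_mul_add_mul_of_charTwo _ (sumPderiv_X v) hd
      (by rw [← pderiv_sumPderiv_comm, hd, map_zero])
  · rintro ⟨H, -, rfl⟩
    exact sumPderiv_sumPderiv H
end

section
/- The Z/2-linear map Ψ : L_n → V_n* given by Ψ(H) = d(H) is well defined and surjective; in particular, for every p ∈ V_n* there exists H ∈ L_n with d(H) = p. -/
open MvPolynomial

/-- Membership in `V_n*`: `d p = 0` and every monomial of `p` has the form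
`X_{v_1} ⋯ X_{v_n}` where `(v_1, …, v_n)` is a basis of `V = (Z/2)^n`. -/
def MemVstar (n : ℕ) (p : MvPolynomial (Fin n → ZMod 2) (ZMod 2)) : Prop :=
  dOp n p = 0 ∧
    ∀ m ∈ p.support, ∃ b : Module.Basis (Fin n) (ZMod 2) (Fin n → ZMod 2),
      m = ∑ j : Fin n, Finsupp.single (b j) 1

/-- Membership in `L_n`: squarefree homogeneous of degree `n+1`, `d H ∈ V_n*`, and the
`n+1` variables of each monomial span `V`. -/
def MemL (n : ℕ) (H : MvPolynomial (Fin n → ZMod 2) (ZMod 2)) : Prop :=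
  IsSqFree n H ∧ H.IsHomogeneous (n + 1) ∧ MemVstar n (dOp n H) ∧
    ∀ m ∈ H.support,
      Submodule.span (ZMod 2) (↑m.support : Set (Fin n → ZMod 2)) = ⊤

/-!
With `s = Σ_{u ≠ 0} X_u` we have `d(X_u q) = q + X_u d q`, hence `d(s p) = (2^n - 1) p = p`
whenever `d p = 0` and `n ≥ 1`. In characteristic 2 every square `X_u²` is a constant for `d`,
and `d` commutes with `∂/∂X_u`, so the correction `Σ_u X_u² ∂p/∂X_u` is killed by `d` as well:
`H = s p + Σ_u X_u² ∂p/∂X_u` satisfies `d H = p`. For squarefree `p` the correction cancels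
exactly those terms `X_u X^m` of `s p` with `X_u ∣ X^m`, so `H = Σ_m Σ_{u ∉ m, u ≠ 0} X_u X^m`
is squarefree of degree `n + 1`, and each of its monomials still contains a basis of `V`.
-/

open Finset

section SumSingleOne

variable {ι α : Type*} [Fintype ι] {f : ι → α}

theorem sum_single_one_apply [DecidableEq α] (a : α) :
    (∑ i, Finsupp.single (f i) 1 : α →₀ ℕ) a = #{i | f i = a} := by
  simp [Finsupp.finsetSum_apply, Finsupp.single_apply]

theorem sum_single_one_apply_le_one (hf : f.Injective) (a : α) :
    (∑ i, Finsupp.single (f i) 1 : α →₀ ℕ) a ≤ 1 := by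
  classical
  rw [sum_single_one_apply]
  exact card_le_one.mpr fun i hi j hj => hf ((mem_filter.mp hi).2.trans (mem_filter.mp hj).2.symm)

theorem mem_support_sum_single_one_iff (a : α) :
    a ∈ (∑ i, Finsupp.single (f i) 1 : α →₀ ℕ).support ↔ a ∈ Set.range f := by
  classical
  simp [sum_single_one_apply]

theorem degree_sum_single_one :
    (∑ i, Finsupp.single (f i) 1 : α →₀ ℕ).degree = Fintype.card ι := by
  simp [map_sum, Finsupp.degree_single]

end SumSingleOne

section PDeriv

variable {σ R : Type*} [CommRing R]

theorem pderiv_pderiv_comm (i j : σ) (p : MvPolynomial σ R) :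
    pderiv i (pderiv j p) = pderiv j (pderiv i p) := by
  classical
  have hbracket : ⁅(pderiv i : Derivation R (MvPolynomial σ R) _), pderiv j⁆ =
      (0 : Derivation R (MvPolynomial σ R) (MvPolynomial σ R)) := by
    refine derivation_ext fun k => ?_
    simp only [Derivation.commutator_apply, pderiv_X, Pi.single_apply, apply_ite, pderiv_one,
      ite_self, map_zero, sub_self, Derivation.zero_apply]
  have := DFunLike.congr_fun hbracket p
  rwa [Derivation.commutator_apply, Derivation.zero_apply, sub_eq_zero] at this

theorem pderiv_sq_mul [CharP R 2] (i : σ) (f g : MvPolynomial σ R) :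
    pderiv i (f ^ 2 * g) = f ^ 2 * pderiv i g := by
  rw [pderiv_mul, pderiv_pow, Nat.cast_two, CharTwo.two_eq_zero, zero_mul, zero_mul, zero_mul,
    zero_add]

end PDeriv

section DOp

variable {n : ℕ}

local notation "V" => Fin n → ZMod 2
local notation "R" => MvPolynomial (Fin n → ZMod 2) (ZMod 2)

theorem dOp_apply_s6 (p : R) : dOp n p = ∑ v : V, pderiv v p := by
  simp [dOp, LinearMap.sum_apply]

theorem dOp_X_mul (u : V) (p : R) : dOp n (X u * p) = p + X u * dOp n p := by
  classical
  simp [dOp_apply_s6, sum_add_distrib, ← mul_sum, Pi.single_apply, add_comm]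

theorem dOp_sq_mul (f p : R) : dOp n (f ^ 2 * p) = f ^ 2 * dOp n p := by
  simp only [dOp_apply_s6, pderiv_sq_mul, mul_sum]

theorem dOp_pderiv (u : V) (p : R) : dOp n (pderiv u p) = pderiv u (dOp n p) := by
  simp only [dOp_apply_s6, map_sum, pderiv_pderiv_comm]

theorem dOp_sum_X_mul_of_dOp_eq_zero (hn : n ≠ 0) {p : R} (hp : dOp n p = 0) :
    dOp n ((∑ u ∈ univ.erase (0 : V), X u) * p) = p := by
  have hcard : ((#(univ.erase (0 : V)) : ℕ) : ZMod 2) = 1 := by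
    rw [card_erase_of_mem (mem_univ _), card_univ, Fintype.card_fun, ZMod.card, Fintype.card_fin]
    push_cast [Nat.cast_sub Nat.one_le_two_pow]
    rw [show (2 : ZMod 2) = 0 from rfl, zero_pow hn]
    rfl
  simp only [sum_mul, map_sum, dOp_X_mul, hp, mul_zero, add_zero, sum_const]
  rw [← Nat.cast_smul_eq_nsmul (ZMod 2), hcard, one_smul]

noncomputable def dLift : R →ₗ[ZMod 2] R :=
  LinearMap.mulLeft (ZMod 2) (∑ u ∈ univ.erase (0 : V), X u) +
    ∑ u : V, LinearMap.mulLeft (ZMod 2) (X u ^ 2) ∘ₗ (pderiv u).toLinearMap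

theorem dLift_apply (p : R) :
    dLift p = (∑ u ∈ univ.erase (0 : V), X u) * p + ∑ u : V, X u ^ 2 * pderiv u p := by
  simp [dLift, LinearMap.sum_apply]

theorem dOp_dLift (hn : n ≠ 0) {p : R} (hp : dOp n p = 0) : dOp n (dLift p) = p := by
  simp only [dLift_apply, map_add, dOp_sum_X_mul_of_dOp_eq_zero hn hp, map_sum, dOp_sq_mul,
    dOp_pderiv, hp, map_zero, mul_zero, sum_const_zero, add_zero]

theorem dLift_monomial {m : V →₀ ℕ} (hm : ∀ v, m v ≤ 1) (hm0 : m 0 = 0) (c : ZMod 2) :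
    dLift (monomial m c) =
      ∑ u ∈ univ.erase 0 \ m.support, monomial (Finsupp.single u 1 + m) c := by
  have hsupp : m.support ⊆ univ.erase 0 := fun v hv =>
    mem_erase.mpr ⟨fun h => Finsupp.mem_support_iff.mp hv (h ▸ hm0), mem_univ v⟩
  have hcorr : ∑ u : V, X u ^ 2 * pderiv u (monomial m c) = ∑ u ∈ m.support, X u * monomial m c :=
    calc ∑ u : V, X u ^ 2 * pderiv u (monomial m c)
        = ∑ u : V, m u • (X u * monomial m c) := by
          simp only [sq, mul_assoc, X_mul_pderiv_monomial, mul_smul_comm]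
      _ = ∑ u ∈ m.support, X u * monomial m c := by
          rw [← sum_subset (subset_univ m.support) fun u _ hu => by
            rw [Finsupp.notMem_support_iff.mp hu, zero_smul]]
          refine sum_congr rfl fun u hu => ?_
          rw [le_antisymm (hm u) (Nat.one_le_iff_ne_zero.mpr (Finsupp.mem_support_iff.mp hu)),
            one_smul]
  rw [dLift_apply, hcorr, sum_mul, ← sum_sdiff hsupp, add_assoc, CharTwo.add_self_eq_zero,
    add_zero]
  simp only [monomial_single_add, pow_one]

theorem mem_support_dLift {p : R} (hp : IsSqFree n p) {m' : V →₀ ℕ}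
    (hm' : m' ∈ (dLift p).support) :
    ∃ m ∈ p.support, ∃ u ≠ 0, m u = 0 ∧ m' = Finsupp.single u 1 + m := by
  classical
  rw [← p.support_sum_monomial_coeff, map_sum] at hm'
  obtain ⟨m, hm, hm'⟩ := mem_biUnion.mp (support_sum hm')
  rw [dLift_monomial (hp m hm).1 (hp m hm).2] at hm'
  obtain ⟨u, hu, hm'⟩ := mem_biUnion.mp (support_sum hm')
  obtain ⟨hu0, hum⟩ := mem_sdiff.mp hu
  exact ⟨m, hm, u, (mem_erase.mp hu0).1, Finsupp.notMem_support_iff.mp hum,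
    mem_singleton.mp (support_monomial_subset hm')⟩

theorem isSqFree_dLift {p : R} (hp : IsSqFree n p) : IsSqFree n (dLift p) := by
  intro m' hm'
  obtain ⟨m, hm, u, hu0, hmu, rfl⟩ := mem_support_dLift hp hm'
  refine ⟨fun v => ?_, ?_⟩
  · obtain rfl | huv := eq_or_ne u v
    · simp [hmu]
    · simpa [Finsupp.single_eq_of_ne' huv] using (hp m hm).1 v
  · simpa [Finsupp.single_eq_of_ne' hu0] using (hp m hm).2

theorem isHomogeneous_dLift {p : R} {k : ℕ} (hp : IsSqFree n p) (hk : p.IsHomogeneous k) :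
    (dLift p).IsHomogeneous (k + 1) := by
  intro m' hm'
  obtain ⟨m, hm, u, -, -, rfl⟩ := mem_support_dLift hp (mem_support_iff.mpr hm')
  rw [map_add, Finsupp.weight_single, hk (mem_support_iff.mp hm), smul_eq_mul, Pi.one_apply,
    mul_one, add_comm]

theorem span_support_dLift {p : R} (hp : IsSqFree n p)
    (hspan : ∀ m ∈ p.support, Submodule.span (ZMod 2) (m.support : Set V) = ⊤) :
    ∀ m' ∈ (dLift p).support, Submodule.span (ZMod 2) (m'.support : Set V) = ⊤ := by
  intro m' hm'
  obtain ⟨m, hm, u, -, -, rfl⟩ := mem_support_dLift hp hm'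
  refine eq_top_mono (Submodule.span_mono fun v hv => ?_) (hspan m hm)
  simp only [mem_coe, Finsupp.mem_support_iff, Finsupp.add_apply] at hv ⊢
  omega

end DOp

namespace MemVstar

variable {n : ℕ} {p : MvPolynomial (Fin n → ZMod 2) (ZMod 2)}

theorem isSqFree (hp : MemVstar n p) : IsSqFree n p := by
  intro m hm
  obtain ⟨b, rfl⟩ := hp.2 m hm
  refine ⟨sum_single_one_apply_le_one b.injective, Finsupp.notMem_support_iff.mp ?_⟩
  rw [mem_support_sum_single_one_iff]
  exact fun ⟨j, hj⟩ => b.ne_zero j hj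

theorem isHomogeneous (hp : MemVstar n p) : p.IsHomogeneous n := by
  intro m hm
  obtain ⟨b, rfl⟩ := hp.2 m (mem_support_iff.mpr hm)
  rw [Pi.one_def, ← Finsupp.degree_eq_weight_one, degree_sum_single_one, Fintype.card_fin]

theorem span_support (hp : MemVstar n p) :
    ∀ m ∈ p.support, Submodule.span (ZMod 2) (m.support : Set (Fin n → ZMod 2)) = ⊤ := by
  intro m hm
  obtain ⟨b, rfl⟩ := hp.2 m hm
  refine eq_top_mono (Submodule.span_mono fun v hv => ?_) b.span_eq
  rw [mem_coe, mem_support_sum_single_one_iff]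
  exact hv

end MemVstar

/-- The map `Ψ : L_n → V_n*`, `Ψ(H) = d H`, is well defined and surjective. -/
theorem psi_wellDefined_surjective (n : ℕ) (hn : 1 ≤ n) :
    (∀ H : MvPolynomial (Fin n → ZMod 2) (ZMod 2), MemL n H → MemVstar n (dOp n H)) ∧
      ∀ p : MvPolynomial (Fin n → ZMod 2) (ZMod 2), MemVstar n p →
        ∃ H : MvPolynomial (Fin n → ZMod 2) (ZMod 2), MemL n H ∧ dOp n H = p := by
  refine ⟨fun H hH => hH.2.2.1, fun p hp => ?_⟩
  have hdLift : dOp n (dLift p) = p := dOp_dLift (Nat.one_le_iff_ne_zero.mp hn) hp.1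
  refine ⟨dLift p, ⟨isSqFree_dLift hp.isSqFree, isHomogeneous_dLift hp.isSqFree hp.isHomogeneous,
    by rwa [hdLift], span_support_dLift hp.isSqFree hp.span_support⟩, hdLift⟩
end
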